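/- Let M = (m_{ij}) be a 4×4 centrosymmetric Markov matrix such that M = exp(Q) for some 4×4 centrosymmetric rate matrix Q. Then m11 + m14 + m22 + m23 > 1. -/

import Mathlib

/-!
Adding column `3 - j` of a centrosymmetric `A` to column `j` and keeping the first two rows gives
the upper block `F` of its Fourier transform, and the symmetric columns of the Fourier matrix
intertwine `A` with `F`. Hence the upper block of `M = exp Q` is `exp F` for a `2 × 2` matrix `F`
with zero row sums. Then `exp F` has unit row sums, so `trace (exp F) = 1 + det (exp F)`, and
`det (exp F) = det (exp (F / 2)) ^ 2 > 0`.
-/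

open Matrix

/-- A Markov matrix: nonnegative entries, rows summing to one. -/
def IsMarkov {n : ℕ} (M : Matrix (Fin n) (Fin n) ℝ) : Prop :=
  (∀ i j, 0 ≤ M i j) ∧ ∀ i, ∑ j, M i j = 1

/-- A rate matrix: nonnegative off-diagonal entries, rows summing to zero. -/
def IsRate {n : ℕ} (Q : Matrix (Fin n) (Fin n) ℝ) : Prop :=
  (∀ i j, i ≠ j → 0 ≤ Q i j) ∧ ∀ i, ∑ j, Q i j = 0

/-- Centrosymmetry: entrywise symmetry about the center of the matrix. -/
def IsCentrosymmetric {n : ℕ} (A : Matrix (Fin n) (Fin n) ℝ) : Prop :=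
  ∀ i j, A i j = A i.rev j.rev

open NormedSpace

open scoped Matrix.Norms.Operator in
theorem Matrix.exp_mul_eq_mul_exp_of_mul_eq {𝕂 m n : Type*} [RCLike 𝕂]
    [Fintype m] [DecidableEq m] [Fintype n] [DecidableEq n]
    {A : Matrix m m 𝕂} {B : Matrix n n 𝕂} {R : Matrix m n 𝕂} (h : A * R = R * B) :
    exp A * R = R * exp B := by
  have hpow (k : ℕ) : A ^ k * R = R * B ^ k := by
    induction k with
    | zero => simp
    | succ k ih =>
      rw [pow_succ, Matrix.mul_assoc, h, ← Matrix.mul_assoc, ih, Matrix.mul_assoc, ← pow_succ]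
  have hA := (exp_series_hasSum_exp' (𝕂 := 𝕂) A).map (addMonoidHomMulRight R)
    (continuous_id.matrix_mul continuous_const)
  have hB := (exp_series_hasSum_exp' (𝕂 := 𝕂) B).map (addMonoidHomMulLeft R)
    (continuous_const.matrix_mul continuous_id)
  refine hA.unique (hB.congr_fun fun k => ?_)
  simp [hpow]

theorem Matrix.sum_exp_apply_eq_one {𝕂 m : Type*} [RCLike 𝕂] [Fintype m] [DecidableEq m]
    {X : Matrix m m 𝕂} (hX : ∀ i, ∑ j, X i j = 0) (i : m) : ∑ j, exp X i j = 1 := by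
  let ones : Matrix m Unit 𝕂 := of fun _ _ => 1
  have h : X * ones = ones * (0 : Matrix Unit Unit 𝕂) := by
    ext i; simp [ones, mul_apply, hX]
  simpa [ones, mul_apply] using congrFun₂ (exp_mul_eq_mul_exp_of_mul_eq h) i ()

theorem Matrix.det_exp_pos {m : Type*} [Fintype m] [DecidableEq m] (X : Matrix m m ℝ) :
    0 < (exp X).det := by
  have hsq : exp X = exp ((1 / 2 : ℝ) • X) ^ 2 := by
    rw [← exp_nsmul, ← Nat.cast_smul_eq_nsmul ℝ, smul_smul]; norm_num
  rw [hsq, det_pow]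
  have hdet := ((isUnit_iff_isUnit_det _).mp (Matrix.isUnit_exp ((1 / 2 : ℝ) • X))).ne_zero
  positivity

theorem Matrix.trace_eq_one_add_det_of_sum_eq_one {R : Type*} [CommRing R]
    {P : Matrix (Fin 2) (Fin 2) R} (hP : ∀ i, ∑ j, P i j = 1) : P.trace = 1 + P.det := by
  have h0 := hP 0
  have h1 := hP 1
  simp only [Fin.sum_univ_two] at h0 h1
  rw [trace_fin_two, det_fin_two]
  linear_combination (1 - P 1 1) * h0 + P 0 1 * h1

theorem Matrix.one_lt_trace_exp_of_sum_eq_zero {X : Matrix (Fin 2) (Fin 2) ℝ}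
    (hX : ∀ i, ∑ j, X i j = 0) : 1 < (exp X).trace := by
  rw [trace_eq_one_add_det_of_sum_eq_one (sum_exp_apply_eq_one hX)]
  linarith [det_exp_pos X]

-- The first two columns of the Fourier matrix `S`: a basis of the reversal-invariant vectors.
def symmetricCols : Matrix (Fin 4) (Fin 2) ℝ := !![1, 0; 0, 1; 0, 1; 1, 0]

def upperFourierBlock (A : Matrix (Fin 4) (Fin 4) ℝ) : Matrix (Fin 2) (Fin 2) ℝ :=
  !![A 0 0 + A 0 3, A 0 1 + A 0 2; A 1 0 + A 1 3, A 1 1 + A 1 2]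

theorem IsCentrosymmetric.mul_symmetricCols {A : Matrix (Fin 4) (Fin 4) ℝ}
    (hA : IsCentrosymmetric A) : A * symmetricCols = symmetricCols * upperFourierBlock A := by
  ext i j
  fin_cases i <;> fin_cases j <;>
    simp [symmetricCols, upperFourierBlock, mul_apply, Fin.sum_univ_four, hA 2, hA 3] <;> ring

theorem upperFourierBlock_eq_of_mul_symmetricCols {A : Matrix (Fin 4) (Fin 4) ℝ}
    {B : Matrix (Fin 2) (Fin 2) ℝ} (h : A * symmetricCols = symmetricCols * B) :
    upperFourierBlock A = B := by
  ext i j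
  have hij := congrFun₂ h (Fin.castLE (by norm_num) i) j
  fin_cases i <;> fin_cases j <;>
    simpa [symmetricCols, upperFourierBlock, mul_apply, Fin.sum_univ_four, add_comm] using hij

theorem IsCentrosymmetric.upperFourierBlock_exp {Q : Matrix (Fin 4) (Fin 4) ℝ}
    (hQ : IsCentrosymmetric Q) : upperFourierBlock (exp Q) = exp (upperFourierBlock Q) :=
  upperFourierBlock_eq_of_mul_symmetricCols (exp_mul_eq_mul_exp_of_mul_eq hQ.mul_symmetricCols)

theorem sum_upperFourierBlock_apply (A : Matrix (Fin 4) (Fin 4) ℝ) (i : Fin 2) :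
    ∑ j, upperFourierBlock A i j = ∑ j, A (Fin.castLE (by norm_num) i) j := by
  fin_cases i <;> simp [upperFourierBlock, Fin.sum_univ_four] <;> ring

theorem trace_upper_block_gt_one_general
    (m11 m12 m13 m14 m21 m22 m23 m24 : ℝ)
    (M : Matrix (Fin 4) (Fin 4) ℝ)
    (hMdef : M = !![m11, m12, m13, m14; m21, m22, m23, m24;
                    m24, m23, m22, m21; m14, m13, m12, m11])
    (Q : Matrix (Fin 4) (Fin 4) ℝ)
    (hQcs : IsCentrosymmetric Q) (hQ : IsRate Q)
    (hexp : NormedSpace.exp Q = M) :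
    1 < m11 + m14 + m22 + m23 := by
  have hrows : ∀ i, ∑ j, upperFourierBlock Q i j = 0 := fun i => by
    rw [sum_upperFourierBlock_apply, hQ.2]
  calc 1 < (exp (upperFourierBlock Q)).trace := one_lt_trace_exp_of_sum_eq_zero hrows
    _ = m11 + m14 + m22 + m23 := by
      rw [← hQcs.upperFourierBlock_exp, hexp, hMdef]
      simp only [upperFourierBlock, trace_fin_two, of_apply, cons_val', cons_val_zero,
        cons_val_fin_one, cons_val, cons_val_one]
      ring

/-- A 4×4 centrosymmetric Markov matrix with a centrosymmetric Markov generator satisfies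
`m11 + m14 + m22 + m23 > 1`. -/
theorem trace_upper_block_gt_one
    (m11 m12 m13 m14 m21 m22 m23 m24 : ℝ)
    (M : Matrix (Fin 4) (Fin 4) ℝ)
    (hMdef : M = !![m11, m12, m13, m14; m21, m22, m23, m24;
                    m24, m23, m22, m21; m14, m13, m12, m11])
    (hM : IsMarkov M)
    (Q : Matrix (Fin 4) (Fin 4) ℝ)
    (hQcs : IsCentrosymmetric Q) (hQ : IsRate Q)
    (hexp : NormedSpace.exp Q = M) :
    1 < m11 + m14 + m22 + m23 :=
  trace_upper_block_gt_one_general m11 m12 m13 m14 m21 m22 m23 m24 M hMdef Q hQcs hQ hexp
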